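/- Let X and Y be rooted trees in which every vertex has at least one child, equipped with uniformizing metrics with parameters ε_X > 0 and ε_Y > 0. Let F : X → Y be a rough quasiisometry between the vertex sets satisfying L₁|x₁-x₂| - Λ ≤ |F(x₁)-F(x₂)| ≤ L₂|x₁-x₂| + Λ for all vertices x₁, x₂ ∈ X (together with the density condition). Then the induced boundary map f : ∂X → ∂Y, defined by f(ζ) = lim_i F(x_i) along the geodesic ray {x_i} from the root to ζ, is a well-defined bijective homeomorphism, and it is an η-quasisymmetric map with η(t) = A t^{α₁} for t ≤ 1 and η(t) = A t^{α₂} for t ≥ 1, where α₁ = L₁ε_Y/ε_X, α₂ = L₂ε_Y/ε_X, and A > 0 is a constant depending only on L₁, L₂, Λ, ε_X, ε_Y and |F(0_X)|. -/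

import Mathlib

open Set
open scoped Classical

/-- A rooted tree, described combinatorially by its vertex set, its root, the parent
function and the depth (graph distance to the root). -/
structure VTree where
  V : Type
  root : V
  parent : V → V
  depth : V → ℕ
  parent_root : parent root = root
  depth_root : depth root = 0
  depth_parent : ∀ v, v ≠ root → depth v = depth (parent v) + 1
  parent_iter_root : ∀ v, parent^[depth v] v = root

namespace VTree

/-- The ancestor of `v` at depth `n` (for `n ≤ depth v`). -/
def anc (T : VTree) (v : T.V) (n : ℕ) : T.V := T.parent^[T.depth v - n] v

/-- The depth of the largest common ancestor of `x` and `y`. -/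
noncomputable def meetDepth (T : VTree) (x y : T.V) : ℕ :=
  sSup {n | n ≤ min (T.depth x) (T.depth y) ∧ T.anc x n = T.anc y n}

/-- The graph distance between two vertices: the number of edges in the geodesic. -/
noncomputable def vdist (T : VTree) (x y : T.V) : ℕ :=
  (T.depth x - T.meetDepth x y) + (T.depth y - T.meetDepth x y)

/-- Every vertex has at least one child. -/
def OneChild (T : VTree) : Prop :=
  ∀ v : T.V, ∃ w : T.V, w ≠ T.root ∧ T.parent w = v

/-- A point of the boundary ∂X: an infinite geodesic ray from the root. -/
def Ray (T : VTree) : Type :=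
  {ζ : ℕ → T.V // ζ 0 = T.root ∧ ∀ n, T.parent (ζ (n + 1)) = ζ n ∧ ζ (n + 1) ≠ T.root}

/-- The visual metric on the boundary with parameter ε. -/
noncomputable def rdist (T : VTree) (ε : ℝ) (ζ ξ : T.Ray) : ℝ :=
  if ζ = ξ then 0
  else (2 / ε) * Real.exp (-ε * (sSup {n : ℕ | ∀ m ≤ n, ζ.1 m = ξ.1 m} : ℕ))

end VTree

namespace VTree

variable (T : VTree)

lemma eq_root_of_depth_eq_zero {v : T.V} (h : T.depth v = 0) : v = T.root := by
  have := T.parent_iter_root v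
  rwa [h, Function.iterate_zero, id] at this

lemma depth_parent_iter (v : T.V) (k : ℕ) :
    T.depth (T.parent^[k] v) = T.depth v - k := by
  induction k with
  | zero => simp
  | succ k ih =>
    rw [Function.iterate_succ_apply']
    by_cases h : T.parent^[k] v = T.root
    · have h0 : T.depth v - k = 0 := by rw [← ih, h, T.depth_root]
      rw [h, T.parent_root, T.depth_root]
      omega
    · have := T.depth_parent _ h
      rw [ih] at this
      have hk : T.depth v - k ≠ 0 := by
        intro h0
        rw [h0] at this
        omega
      omega

lemma depth_anc {v : T.V} {n : ℕ} (h : n ≤ T.depth v) : T.depth (T.anc v n) = n := by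
  rw [anc, depth_parent_iter]; omega

lemma anc_of_depth_le {v : T.V} {n : ℕ} (h : T.depth v ≤ n) : T.anc v n = v := by
  rw [anc, Nat.sub_eq_zero_of_le h, Function.iterate_zero, id]

lemma anc_zero (v : T.V) : T.anc v 0 = T.root := by
  rw [anc, Nat.sub_zero]; exact T.parent_iter_root v

lemma anc_anc {v : T.V} {k n : ℕ} (hk : k ≤ n) : T.anc (T.anc v n) k = T.anc v k := by
  rcases le_or_gt (T.depth v) n with h | h
  · rw [anc_of_depth_le T h]
  · have hdn : T.depth (T.anc v n) = n := depth_anc T h.le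
    rw [anc, anc, anc]
    rw [show T.depth (T.parent^[T.depth v - n] v) = n from hdn]
    rw [← Function.iterate_add_apply]
    congr 1
    omega

lemma parent_anc {v : T.V} {n : ℕ} (h : n + 1 ≤ T.depth v) :
    T.parent (T.anc v (n + 1)) = T.anc v n := by
  rw [anc, anc]
  rw [show T.depth v - n = (T.depth v - (n+1)) + 1 by omega]
  rw [Function.iterate_succ_apply']

lemma anc_mem_of_eq {v : T.V} {n : ℕ} : T.anc (T.anc v n) n = T.anc v n :=
  anc_anc T le_rfl

-- meet lemmas
lemma meet_bddAbove (x y : T.V) :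
    BddAbove {n | n ≤ min (T.depth x) (T.depth y) ∧ T.anc x n = T.anc y n} :=
  ⟨min (T.depth x) (T.depth y), fun _ hn => hn.1⟩

lemma meet_mem (x y : T.V) : T.meetDepth x y ∈
    {n | n ≤ min (T.depth x) (T.depth y) ∧ T.anc x n = T.anc y n} := by
  apply Nat.sSup_mem
  · exact ⟨0, by simp [anc_zero]⟩
  · exact meet_bddAbove T x y

lemma meet_le_depth_left (x y : T.V) : T.meetDepth x y ≤ T.depth x :=
  le_trans (meet_mem T x y).1 (min_le_left _ _)

lemma meet_le_depth_right (x y : T.V) : T.meetDepth x y ≤ T.depth y :=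
  le_trans (meet_mem T x y).1 (min_le_right _ _)

lemma anc_meet_eq (x y : T.V) : T.anc x (T.meetDepth x y) = T.anc y (T.meetDepth x y) :=
  (meet_mem T x y).2

lemma le_meet {x y : T.V} {n : ℕ} (h1 : n ≤ T.depth x) (h2 : n ≤ T.depth y)
    (h3 : T.anc x n = T.anc y n) : n ≤ T.meetDepth x y :=
  le_csSup (meet_bddAbove T x y) ⟨le_min h1 h2, h3⟩

lemma anc_eq_of_le_meet {x y : T.V} {n : ℕ} (h : n ≤ T.meetDepth x y) :
    T.anc x n = T.anc y n := by
  rw [← anc_anc T h, anc_meet_eq T x y, anc_anc T h]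

lemma meet_self (v : T.V) : T.meetDepth v v = T.depth v :=
  le_antisymm (meet_le_depth_left T v v) (le_meet T le_rfl le_rfl rfl)

lemma meet_comm (x y : T.V) : T.meetDepth x y = T.meetDepth y x :=
  le_antisymm
    (le_meet T (meet_le_depth_right T x y) (meet_le_depth_left T x y) (anc_meet_eq T x y).symm)
    (le_meet T (meet_le_depth_right T y x) (meet_le_depth_left T y x) (anc_meet_eq T y x).symm)

lemma ultrametric (x y z : T.V) :
    min (T.meetDepth x y) (T.meetDepth y z) ≤ T.meetDepth x z := by
  set m := min (T.meetDepth x y) (T.meetDepth y z) with hm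
  apply le_meet T
  · exact le_trans (min_le_left _ _) (meet_le_depth_left T x y)
  · exact le_trans (min_le_right _ _) (meet_le_depth_right T y z)
  · have h1 : T.anc x m = T.anc y m := anc_eq_of_le_meet T (min_le_left _ _)
    have h2 : T.anc y m = T.anc z m := anc_eq_of_le_meet T (min_le_right _ _)
    exact h1.trans h2

lemma vdist_cast (x y : T.V) :
    (T.vdist x y : ℝ) = T.depth x + T.depth y - 2 * T.meetDepth x y := by
  rw [vdist]
  push_cast [Nat.cast_sub (meet_le_depth_left T x y), Nat.cast_sub (meet_le_depth_right T x y)]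
  ring

lemma vdist_self (v : T.V) : T.vdist v v = 0 := by
  rw [vdist, meet_self]; omega

lemma vdist_comm (x y : T.V) : T.vdist x y = T.vdist y x := by
  rw [vdist, vdist, meet_comm]
  omega

lemma depth_sub_le_vdist (x y : T.V) : (T.depth x : ℝ) - T.depth y ≤ T.vdist x y := by
  have h := meet_le_depth_right T x y
  rw [vdist_cast]
  have : (T.meetDepth x y : ℝ) ≤ T.depth y := by exact_mod_cast h
  linarith

lemma depth_le_vdist_add (x y : T.V) : (T.depth y : ℝ) ≤ T.vdist x y + T.depth x := by
  have h := meet_le_depth_left T x y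
  rw [vdist_cast]
  have : (T.meetDepth x y : ℝ) ≤ T.depth x := by exact_mod_cast h
  linarith

lemma vdist_triangle (x y z : T.V) : (T.vdist x z : ℝ) ≤ T.vdist x y + T.vdist y z := by
  rw [vdist_cast, vdist_cast, vdist_cast]
  have h1 : min (T.meetDepth x y) (T.meetDepth y z) ≤ T.meetDepth x z := ultrametric T x y z
  have h2 : max (T.meetDepth x y) (T.meetDepth y z) ≤ T.depth y :=
    max_le (meet_le_depth_right T x y) (meet_le_depth_left T y z)
  have h3 : (T.meetDepth x y : ℝ) + T.meetDepth y z ≤ T.meetDepth x z + T.depth y := by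
    have := min_add_max (T.meetDepth x y) (T.meetDepth y z)
    have h1' : (min (T.meetDepth x y) (T.meetDepth y z) : ℝ) ≤ T.meetDepth x z := by
      exact_mod_cast h1
    have h2' : (max (T.meetDepth x y) (T.meetDepth y z) : ℝ) ≤ T.depth y := by
      exact_mod_cast h2
    have h4 : (T.meetDepth x y : ℝ) + T.meetDepth y z
        = (min (T.meetDepth x y) (T.meetDepth y z) : ℕ) + (max (T.meetDepth x y) (T.meetDepth y z) : ℕ) := by
      exact_mod_cast congrArg (fun n : ℕ => (n : ℝ)) this.symm
    rw [h4]
    push_cast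
    linarith
  linarith

lemma vdist_depth_bound (x : T.V) : (T.vdist x T.root : ℝ) = T.depth x := by
  have h : T.meetDepth x T.root = 0 := by
    have := meet_le_depth_right T x T.root
    rw [T.depth_root] at this
    omega
  rw [vdist_cast, h, T.depth_root]
  push_cast
  ring


end VTree

namespace VTree
variable {T : VTree}

lemma ray_depth (ζ : T.Ray) (n : ℕ) : T.depth (ζ.1 n) = n := by
  induction n with
  | zero => rw [ζ.2.1, T.depth_root]
  | succ n ih =>
    have h := ζ.2.2 n
    rw [T.depth_parent _ h.2, h.1, ih]

lemma ray_anc (ζ : T.Ray) {m n : ℕ} (h : m ≤ n) : T.anc (ζ.1 n) m = ζ.1 m := by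
  induction n with
  | zero =>
    have : m = 0 := Nat.le_zero.mp h
    subst this
    exact T.anc_of_depth_le (by rw [ray_depth])
  | succ n ih =>
    rcases Nat.lt_or_ge m (n+1) with h' | h'
    · have hm : m ≤ n := by omega
      have h1 : T.anc (ζ.1 (n+1)) n = ζ.1 n := by
        have hd : T.depth (ζ.1 (n+1)) = n + 1 := ray_depth ζ (n+1)
        rw [anc, hd]
        rw [show n + 1 - n = 1 by omega]
        rw [Function.iterate_one, (ζ.2.2 n).1]
      rw [← T.anc_anc hm, h1, ih hm]
    · have : m = n + 1 := by omega
      subst this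
      exact T.anc_of_depth_le (by rw [ray_depth])

/-- depth of the branch point of two rays. -/
noncomputable def kray (ζ ξ : T.Ray) : ℕ := sSup {n : ℕ | ∀ m ≤ n, ζ.1 m = ξ.1 m}

lemma kray_set_mem_iff (ζ ξ : T.Ray) (n : ℕ) :
    n ∈ {n : ℕ | ∀ m ≤ n, ζ.1 m = ξ.1 m} ↔ ζ.1 n = ξ.1 n := by
  constructor
  · intro h; exact h n le_rfl
  · intro h m hm
    rw [← ray_anc ζ hm, ← ray_anc ξ hm, h]

lemma kray_bddAbove {ζ ξ : T.Ray} (h : ζ ≠ ξ) :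
    BddAbove {n : ℕ | ∀ m ≤ n, ζ.1 m = ξ.1 m} := by
  have hex : ∃ n, ζ.1 n ≠ ξ.1 n := by
    by_contra hc
    push_neg at hc
    exact h (Subtype.ext (funext hc))
  obtain ⟨n, hn⟩ := hex
  refine ⟨n, fun k hk => ?_⟩
  by_contra hlt
  push_neg at hlt
  exact hn (hk n hlt.le)

lemma kray_mem {ζ ξ : T.Ray} (h : ζ ≠ ξ) :
    ∀ m ≤ kray ζ ξ, ζ.1 m = ξ.1 m := by
  have : kray ζ ξ ∈ {n : ℕ | ∀ m ≤ n, ζ.1 m = ξ.1 m} :=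
    Nat.sSup_mem ⟨0, by simp [ζ.2.1, ξ.2.1]⟩ (kray_bddAbove h)
  exact this

lemma le_kray {ζ ξ : T.Ray} (h : ζ ≠ ξ) {n : ℕ} (hn : ζ.1 n = ξ.1 n) :
    n ≤ kray ζ ξ :=
  le_csSup (kray_bddAbove h) ((kray_set_mem_iff ζ ξ n).mpr hn)

lemma ray_pt_ne {ζ ξ : T.Ray} (h : ζ ≠ ξ) {n : ℕ} (hn : kray ζ ξ < n) :
    ζ.1 n ≠ ξ.1 n := fun hc => absurd (le_kray h hc) (by omega)

lemma kray_comm (ζ ξ : T.Ray) : kray ζ ξ = kray ξ ζ := by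
  unfold kray
  congr 1
  ext n
  constructor <;> intro h m hm <;> exact (h m hm).symm

/-- meets of points on two distinct rays beyond the branch point. -/
lemma meet_ray_pts {ζ ξ : T.Ray} (h : ζ ≠ ξ) {i j : ℕ}
    (hi : kray ζ ξ ≤ i) (hj : kray ζ ξ ≤ j) :
    T.meetDepth (ζ.1 i) (ξ.1 j) = kray ζ ξ := by
  apply le_antisymm
  · set m := T.meetDepth (ζ.1 i) (ξ.1 j) with hm
    have h1 : m ≤ T.depth (ζ.1 i) := T.meet_le_depth_left _ _
    have h2 : m ≤ T.depth (ξ.1 j) := T.meet_le_depth_right _ _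
    rw [ray_depth] at h1
    rw [ray_depth] at h2
    have h3 := T.anc_meet_eq (ζ.1 i) (ξ.1 j)
    rw [ray_anc ζ h1, ray_anc ξ h2] at h3
    exact le_kray h h3
  · apply T.le_meet
    · rw [ray_depth]; exact hi
    · rw [ray_depth]; exact hj
    · rw [ray_anc ζ hi, ray_anc ξ hj]
      exact kray_mem h _ le_rfl

lemma vdist_ray_pts {ζ ξ : T.Ray} (h : ζ ≠ ξ) {i j : ℕ}
    (hi : kray ζ ξ ≤ i) (hj : kray ζ ξ ≤ j) :
    (T.vdist (ζ.1 i) (ξ.1 j) : ℝ) = (i : ℝ) + j - 2 * kray ζ ξ := by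
  rw [T.vdist_cast, meet_ray_pts h hi hj, ray_depth, ray_depth]

lemma meet_same_ray (ζ : T.Ray) (i j : ℕ) :
    T.meetDepth (ζ.1 i) (ζ.1 j) = min i j := by
  apply le_antisymm
  · have h1 := T.meet_le_depth_left (ζ.1 i) (ζ.1 j)
    have h2 := T.meet_le_depth_right (ζ.1 i) (ζ.1 j)
    rw [ray_depth] at h1
    rw [ray_depth] at h2
    omega
  · apply T.le_meet
    · rw [ray_depth]; exact min_le_left _ _
    · rw [ray_depth]; exact min_le_right _ _
    · rw [ray_anc ζ (min_le_left _ _), ray_anc ζ (min_le_right _ _)]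

lemma vdist_same_ray (ζ : T.Ray) {i j : ℕ} (h : i ≤ j) :
    (T.vdist (ζ.1 i) (ζ.1 j) : ℝ) = (j : ℝ) - i := by
  rw [T.vdist_cast, meet_same_ray, ray_depth, ray_depth, min_eq_left h]
  ring

lemma rdist_eq {ζ ξ : T.Ray} (ε : ℝ) (h : ζ ≠ ξ) :
    T.rdist ε ζ ξ = (2 / ε) * Real.exp (-ε * kray ζ ξ) := by
  rw [rdist, if_neg h]; rfl

lemma rdist_pos {ζ ξ : T.Ray} {ε : ℝ} (hε : 0 < ε) (h : ζ ≠ ξ) :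
    0 < T.rdist ε ζ ξ := by
  rw [rdist_eq ε h]
  positivity

lemma rdist_self (ζ : T.Ray) (ε : ℝ) : T.rdist ε ζ ζ = 0 := by
  rw [rdist, if_pos rfl]

end VTree

open VTree

noncomputable def qgc4 (l₁ l₂ lam : ℝ) : ℝ := (2*(l₂+lam) + lam)/l₁

noncomputable def qgC6 (l₁ l₂ lam D : ℝ) : ℝ :=
  D + 1 + (l₂+lam) + l₂ * qgc4 l₁ l₂ lam + lam

noncomputable def qgS (l₁ l₂ lam D : ℝ) : ℝ :=
  (2*(qgC6 l₁ l₂ lam D + (l₂+lam)) + lam)/l₁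

noncomputable def qgCU (l₁ l₂ lam D : ℝ) : ℝ :=
  qgC6 l₁ l₂ lam D + D + l₂ * qgS l₁ l₂ lam D + lam + 1

structure QGH (Y : VTree) (l₁ l₂ lam D : ℝ) (w : ℕ → Y.V) : Prop where
  low : ∀ i j : ℕ, i ≤ j → l₁ * ((j:ℝ) - i) - lam ≤ (Y.vdist (w i) (w j) : ℝ)
  up : ∀ i j : ℕ, i ≤ j → (Y.vdist (w i) (w j) : ℝ) ≤ l₂ * ((j:ℝ) - i) + lam
  d0 : (Y.depth (w 0) : ℝ) ≤ D

section QG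

variable {Y : VTree} {l₁ l₂ lam D : ℝ} {w : ℕ → Y.V}

lemma qgc4_nonneg (hl₁ : 0 < l₁) (hl₂ : 0 < l₂) (hlam : 0 ≤ lam) : 0 ≤ qgc4 l₁ l₂ lam := by
  unfold qgc4; positivity

lemma qgC6_nonneg (hl₁ : 0 < l₁) (hl₂ : 0 < l₂) (hlam : 0 ≤ lam) (hD : 0 ≤ D) :
    0 ≤ qgC6 l₁ l₂ lam D := by
  have := qgc4_nonneg hl₁ hl₂ hlam
  unfold qgC6; positivity

lemma le_qgC6_D (hl₁ : 0 < l₁) (hl₂ : 0 < l₂) (hlam : 0 ≤ lam) (hD : 0 ≤ D) :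
    D + 1 ≤ qgC6 l₁ l₂ lam D := by
  have := qgc4_nonneg hl₁ hl₂ hlam
  unfold qgC6; nlinarith

lemma qgS_nonneg (hl₁ : 0 < l₁) (hl₂ : 0 < l₂) (hlam : 0 ≤ lam) (hD : 0 ≤ D) :
    0 ≤ qgS l₁ l₂ lam D := by
  have := qgC6_nonneg hl₁ hl₂ hlam hD
  unfold qgS; positivity

lemma qgCU_nonneg (hl₁ : 0 < l₁) (hl₂ : 0 < l₂) (hlam : 0 ≤ lam) (hD : 0 ≤ D) :
    0 ≤ qgCU l₁ l₂ lam D := by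
  have h1 := qgC6_nonneg hl₁ hl₂ hlam hD
  have h2 := qgS_nonneg hl₁ hl₂ hlam hD
  unfold qgCU; nlinarith

lemma le_qgCU_D (hl₁ : 0 < l₁) (hl₂ : 0 < l₂) (hlam : 0 ≤ lam) (hD : 0 ≤ D) :
    D + 1 ≤ qgCU l₁ l₂ lam D := by
  have h1 := qgC6_nonneg hl₁ hl₂ hlam hD
  have h2 := qgS_nonneg hl₁ hl₂ hlam hD
  unfold qgCU; nlinarith

lemma passingA (hq : QGH Y l₁ l₂ lam D w) {i j δ : ℕ} (hij : i ≤ j)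
    (h1 : Y.meetDepth (w i) (w j) < δ) (h2 : δ ≤ Y.depth (w j)) :
    ∃ k, i < k ∧ k ≤ j ∧ Y.anc (w k) δ = Y.anc (w j) δ ∧ δ ≤ Y.depth (w k) ∧
      (Y.depth (w k) : ℝ) ≤ δ + (l₂ + lam) := by
  classical
  have hex : ∃ k, i ≤ k ∧ k ≤ j ∧ δ ≤ Y.meetDepth (w k) (w j) :=
    ⟨j, hij, le_rfl, by rw [Y.meet_self]; exact h2⟩
  have hspec := Nat.find_spec hex
  set k := Nat.find hex with hk
  obtain ⟨hki, hkj, hkm⟩ := hspec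
  have hik : i < k := by
    rcases eq_or_lt_of_le hki with h | h
    · exfalso; rw [← h] at hkm; omega
    · exact h
  have hmk1 : Y.meetDepth (w (k-1)) (w j) < δ := by
    by_contra hc
    push_neg at hc
    exact Nat.find_min hex (show k - 1 < k by omega) ⟨by omega, by omega, hc⟩
  have hstep := Y.ultrametric (w (k-1)) (w k) (w j)
  have hmk2 : Y.meetDepth (w (k-1)) (w k) < δ := by
    rcases le_total (Y.meetDepth (w (k-1)) (w k)) (Y.meetDepth (w k) (w j)) with h | h
    · rw [min_eq_left h] at hstep; omega
    · rw [min_eq_right h] at hstep; omega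
  have hvd : (Y.vdist (w (k-1)) (w k) : ℝ) ≤ l₂ + lam := by
    have h := hq.up (k-1) k (by omega)
    have hc : ((k-1 : ℕ) : ℝ) = (k:ℝ) - 1 := by
      rw [Nat.cast_sub (by omega)]; norm_num
    rw [hc] at h
    calc (Y.vdist (w (k-1)) (w k) : ℝ) ≤ l₂ * ((k:ℝ) - ((k:ℝ)-1)) + lam := h
    _ = l₂ + lam := by ring
  have hdep : δ ≤ Y.depth (w k) := le_trans hkm (Y.meet_le_depth_left _ _)
  have hd1 : Y.meetDepth (w (k-1)) (w k) ≤ Y.depth (w (k-1)) := Y.meet_le_depth_left _ _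
  have hdub : (Y.depth (w k) : ℝ) ≤ δ + (l₂ + lam) := by
    have hcast := Y.vdist_cast (w (k-1)) (w k)
    have e1 : (Y.meetDepth (w (k-1)) (w k) : ℝ) ≤ (δ:ℝ) - 1 := by
      have : Y.meetDepth (w (k-1)) (w k) ≤ δ - 1 := by omega
      have hδ : 1 ≤ δ := by omega
      calc (Y.meetDepth (w (k-1)) (w k) : ℝ) ≤ ((δ - 1 : ℕ) : ℝ) := by exact_mod_cast this
      _ = (δ:ℝ) - 1 := by rw [Nat.cast_sub hδ]; norm_num
    have e2 : (Y.meetDepth (w (k-1)) (w k) : ℝ) ≤ (Y.depth (w (k-1)) : ℝ) := by exact_mod_cast hd1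
    linarith
  exact ⟨k, hik, hkj, Y.anc_eq_of_le_meet hkm, hdep, hdub⟩

lemma passingB (hq : QGH Y l₁ l₂ lam D w) {i j δ : ℕ} (hij : i ≤ j)
    (h1 : Y.meetDepth (w i) (w j) < δ) (h2 : δ ≤ Y.depth (w i)) :
    ∃ k, i ≤ k ∧ k < j ∧ Y.anc (w k) δ = Y.anc (w i) δ ∧ δ ≤ Y.depth (w k) ∧
      (Y.depth (w k) : ℝ) ≤ δ + (l₂ + lam) := by
  classical
  set S := {k : ℕ | k ≤ j ∧ δ ≤ Y.meetDepth (w i) (w k)} with hS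
  have hiS : i ∈ S := ⟨hij, by rw [Y.meet_self]; exact h2⟩
  have hbd : BddAbove S := ⟨j, fun _ h => h.1⟩
  have hmem := Nat.sSup_mem ⟨i, hiS⟩ hbd
  have hik : i ≤ sSup S := le_csSup hbd hiS
  set k := sSup S with hk
  obtain ⟨hkj, hkm⟩ := hmem
  have hkj' : k < j := by
    rcases eq_or_lt_of_le hkj with h | h
    · exfalso; rw [h] at hkm; omega
    · exact h
  have hknot : ¬ (k + 1 ∈ S) := fun hc => by
    have h5 := le_csSup hbd hc
    rw [← hk] at h5
    omega
  have hmk1 : Y.meetDepth (w i) (w (k+1)) < δ := by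
    by_contra hc
    push_neg at hc
    exact hknot ⟨by omega, hc⟩
  have hstep := Y.ultrametric (w i) (w k) (w (k+1))
  have hmk2 : Y.meetDepth (w k) (w (k+1)) < δ := by
    rcases le_total (Y.meetDepth (w i) (w k)) (Y.meetDepth (w k) (w (k+1))) with h | h
    · rw [min_eq_left h] at hstep; omega
    · rw [min_eq_right h] at hstep; omega
  have hvd : (Y.vdist (w k) (w (k+1)) : ℝ) ≤ l₂ + lam := by
    have h := hq.up k (k+1) (by omega)
    calc (Y.vdist (w k) (w (k+1)) : ℝ) ≤ l₂ * (((k:ℝ)+1) - (k:ℝ)) + lam := by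
          push_cast at h ⊢; linarith
    _ = l₂ + lam := by ring
  have hdep : δ ≤ Y.depth (w k) := le_trans hkm (Y.meet_le_depth_right _ _)
  have hd1 : Y.meetDepth (w k) (w (k+1)) ≤ Y.depth (w (k+1)) := Y.meet_le_depth_right _ _
  have hdub : (Y.depth (w k) : ℝ) ≤ δ + (l₂ + lam) := by
    have hcast := Y.vdist_cast (w k) (w (k+1))
    have e1 : (Y.meetDepth (w k) (w (k+1)) : ℝ) ≤ (δ:ℝ) - 1 := by
      have h3 : Y.meetDepth (w k) (w (k+1)) ≤ δ - 1 := by omega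
      have hδ : 1 ≤ δ := by omega
      calc (Y.meetDepth (w k) (w (k+1)) : ℝ) ≤ ((δ - 1 : ℕ) : ℝ) := by exact_mod_cast h3
      _ = (δ:ℝ) - 1 := by rw [Nat.cast_sub hδ]; norm_num
    have e2 : (Y.meetDepth (w k) (w (k+1)) : ℝ) ≤ (Y.depth (w (k+1)) : ℝ) := by exact_mod_cast hd1
    linarith
  exact ⟨k, hik, hkj', (Y.anc_eq_of_le_meet hkm).symm, hdep, hdub⟩

lemma qg_mono (hq : QGH Y l₁ l₂ lam D w)
    (hl₁ : 0 < l₁) (hl₂ : 0 < l₂) (hlam : 0 ≤ lam) (hD : 0 ≤ D) {s t : ℕ} (hst : s ≤ t) :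
    (Y.depth (w s) : ℝ) - qgC6 l₁ l₂ lam D ≤ (Y.meetDepth (w s) (w t) : ℝ) := by
  set m := Y.meetDepth (w s) (w t) with hm
  set m0 := Y.meetDepth (w 0) (w s) with hm0
  have hm0D : (m0:ℝ) ≤ D := by
    have h := Y.meet_le_depth_left (w 0) (w s)
    have : (m0:ℝ) ≤ (Y.depth (w 0) : ℝ) := by exact_mod_cast h
    linarith [hq.d0]
  have hc4 := qgc4_nonneg hl₁ hl₂ hlam
  set δ := max m m0 + 1 with hδ
  rcases Nat.lt_or_ge (Y.depth (w s)) δ with hcase | hcase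
  · have hle : Y.depth (w s) ≤ max m m0 := by omega
    have h1 : (Y.depth (w s):ℝ) ≤ (m:ℝ) + D := by
      rcases le_total m0 m with h | h
      · rw [max_eq_left h] at hle
        have : (Y.depth (w s):ℝ) ≤ (m:ℝ) := by exact_mod_cast hle
        linarith
      · rw [max_eq_right h] at hle
        have : (Y.depth (w s):ℝ) ≤ (m0:ℝ) := by exact_mod_cast hle
        linarith
    have h2 := le_qgC6_D (D := D) hl₁ hl₂ hlam hD
    linarith
  · obtain ⟨σ, hσ0, hσs, hσanc, hσd1, hσd2⟩ :=
      passingA hq (Nat.zero_le s) (show Y.meetDepth (w 0) (w s) < δ by omega) hcase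
    obtain ⟨τ, hsτ, hτt, hτanc, hτd1, hτd2⟩ :=
      passingB hq hst (show m < δ by omega) hcase
    have hmeet : δ ≤ Y.meetDepth (w σ) (w τ) :=
      Y.le_meet hσd1 hτd1 (hσanc.trans hτanc.symm)
    have hmeetR : (δ:ℝ) ≤ (Y.meetDepth (w σ) (w τ) : ℝ) := by exact_mod_cast hmeet
    have hvd : (Y.vdist (w σ) (w τ):ℝ) ≤ 2*(l₂+lam) := by
      rw [Y.vdist_cast]; linarith
    have hlow := hq.low σ τ (le_trans hσs hsτ)
    have hτσ : (τ:ℝ) - σ ≤ qgc4 l₁ l₂ lam := by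
      rw [qgc4, le_div_iff₀ hl₁]
      nlinarith
    have hσsR : (σ:ℝ) ≤ (s:ℝ) := by exact_mod_cast hσs
    have hsτR : (s:ℝ) ≤ (τ:ℝ) := by exact_mod_cast hsτ
    have hvd2 := hq.up s τ hsτ
    have hvd3 : (Y.vdist (w s) (w τ):ℝ) ≤ l₂ * qgc4 l₁ l₂ lam + lam := by
      have : l₂ * ((τ:ℝ) - s) ≤ l₂ * qgc4 l₁ l₂ lam := by
        apply mul_le_mul_of_nonneg_left _ hl₂.le
        linarith
      linarith
    have hds := Y.depth_sub_le_vdist (w s) (w τ)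
    have hδR : (δ:ℝ) ≤ (m:ℝ) + D + 1 := by
      have : ((max m m0 : ℕ):ℝ) ≤ (m:ℝ) + D := by
        rcases le_total m0 m with h | h
        · rw [max_eq_left h]; linarith
        · rw [max_eq_right h]
          have : (m0:ℝ) ≤ D := hm0D
          have hmn : (0:ℝ) ≤ m := by positivity
          linarith
      have hcast : (δ:ℝ) = ((max m m0 : ℕ):ℝ) + 1 := by rw [hδ]; push_cast; ring
      linarith
    rw [qgC6]
    linarith

lemma qg_growth (hq : QGH Y l₁ l₂ lam D w) (t : ℕ) :
    l₁ * t - lam - D ≤ (Y.depth (w t) : ℝ) := by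
  have hlow := hq.low 0 t (Nat.zero_le t)
  have h1 : (Y.vdist (w 0) (w t) : ℝ) ≤ Y.depth (w 0) + Y.depth (w t) := by
    rw [Y.vdist_cast]
    have : (0:ℝ) ≤ (Y.meetDepth (w 0) (w t) : ℝ) := by positivity
    linarith
  have hd0 := hq.d0
  push_cast at hlow
  rw [sub_zero] at hlow
  linarith

lemma qg_exists_depth (hq : QGH Y l₁ l₂ lam D w) (hl₁ : 0 < l₁) (r : ℝ) :
    ∃ s : ℕ, r ≤ (Y.depth (w s) : ℝ) := by
  obtain ⟨s, hs⟩ := exists_nat_ge ((r + lam + D)/l₁)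
  refine ⟨s, ?_⟩
  have := qg_growth hq s
  rw [div_le_iff₀ hl₁] at hs
  nlinarith

lemma qg_stab (hq : QGH Y l₁ l₂ lam D w)
    (hl₁ : 0 < l₁) (hl₂ : 0 < l₂) (hlam : 0 ≤ lam) (hD : 0 ≤ D) {s t m : ℕ} (hst : s ≤ t)
    (hm : (m:ℝ) + qgC6 l₁ l₂ lam D ≤ (Y.depth (w s) : ℝ)) :
    Y.anc (w s) m = Y.anc (w t) m ∧ m ≤ Y.depth (w t) := by
  have hmono := qg_mono hq hl₁ hl₂ hlam hD hst
  have hmm : m ≤ Y.meetDepth (w s) (w t) := by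
    have : (m:ℝ) ≤ (Y.meetDepth (w s) (w t) : ℝ) := by linarith
    exact_mod_cast this
  exact ⟨Y.anc_eq_of_le_meet hmm, le_trans hmm (Y.meet_le_depth_right _ _)⟩

end QG

section LimRay

variable {Y : VTree} {l₁ l₂ lam D : ℝ} {w : ℕ → Y.V} {C : ℝ}

/-- first time the path depth exceeds `m + C`. -/
noncomputable def qgT (w : ℕ → Y.V) (C : ℝ)
    (hex : ∀ m : ℕ, ∃ s : ℕ, (m:ℝ) + C ≤ (Y.depth (w s) : ℝ)) (m : ℕ) : ℕ :=
  Nat.find (hex m)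

/-- the limit ray of a quasigeodesic path. -/
noncomputable def limRayFun (w : ℕ → Y.V) (C : ℝ)
    (hex : ∀ m : ℕ, ∃ s : ℕ, (m:ℝ) + C ≤ (Y.depth (w s) : ℝ)) (m : ℕ) : Y.V :=
  Y.anc (w (qgT w C hex m)) m

variable (hex : ∀ m : ℕ, ∃ s : ℕ, (m:ℝ) + C ≤ (Y.depth (w s) : ℝ))

lemma qgT_spec (m : ℕ) : (m:ℝ) + C ≤ (Y.depth (w (qgT w C hex m)) : ℝ) :=
  Nat.find_spec (hex m)

lemma qgT_mono {m m' : ℕ} (h : m ≤ m') : qgT w C hex m ≤ qgT w C hex m' := by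
  apply Nat.find_mono
  intro n hn
  have : (m : ℝ) ≤ (m' : ℝ) := by exact_mod_cast h
  linarith

variable (hq : QGH Y l₁ l₂ lam D w)
variable (hl₁ : 0 < l₁) (hl₂ : 0 < l₂) (hlam : 0 ≤ lam) (hD : 0 ≤ D)
variable (hC : qgC6 l₁ l₂ lam D ≤ C)

include hq hl₁ hl₂ hlam hD hC in
lemma limRay_stab {m n : ℕ} (hn : qgT w C hex m ≤ n) :
    Y.anc (w n) m = limRayFun w C hex m ∧ m ≤ Y.depth (w n) := by
  have hspec := qgT_spec hex m
  have h := qg_stab hq hl₁ hl₂ hlam hD (m := m) hn (by linarith)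
  exact ⟨h.1.symm, h.2⟩

include hq hl₁ hl₂ hlam hD hC in
lemma limRay_isRay (hC0 : 0 ≤ C) :
    limRayFun w C hex 0 = Y.root ∧
      ∀ n, Y.parent (limRayFun w C hex (n+1)) = limRayFun w C hex n ∧
        limRayFun w C hex (n+1) ≠ Y.root := by
  constructor
  · exact Y.anc_zero _
  · intro n
    set t := qgT w C hex (n+1) with ht
    have hdep : ((n:ℝ) + 1) + C ≤ (Y.depth (w t) : ℝ) := by
      have := qgT_spec hex (n+1)
      push_cast at this
      exact_mod_cast this
    have hdepn : n + 1 ≤ Y.depth (w t) := by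
      have : ((n+1 : ℕ):ℝ) ≤ (Y.depth (w t) : ℝ) := by push_cast; linarith
      exact_mod_cast this
    constructor
    · have h1 : Y.parent (Y.anc (w t) (n+1)) = Y.anc (w t) n := Y.parent_anc hdepn
      have h2 : Y.anc (w t) n = limRayFun w C hex n :=
        (limRay_stab hex hq hl₁ hl₂ hlam hD hC (qgT_mono hex (Nat.le_succ n))).1
      rw [limRayFun, ← ht, h1, h2]
    · intro hc
      have hd : Y.depth (limRayFun w C hex (n+1)) = n + 1 := by
        rw [limRayFun, ← ht]
        exact Y.depth_anc hdepn
      rw [hc, Y.depth_root] at hd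
      omega

include hl₁ hl₂ hlam hD hC in
lemma limRay_depth (m : ℕ) : Y.depth (limRayFun w C hex m) = m := by
  have hdep := qgT_spec hex m
  apply Y.depth_anc
  have hC6 := qgC6_nonneg hl₁ hl₂ hlam hD
  have : (m:ℝ) ≤ (Y.depth (w (qgT w C hex m)) : ℝ) := by linarith
  exact_mod_cast this

end LimRay

section Pair

variable {Y : VTree} {l₁ l₂ lam D : ℝ} {w w' : ℕ → Y.V} {C : ℝ} {a : ℕ}
variable (hex : ∀ m : ℕ, ∃ s : ℕ, (m:ℝ) + C ≤ (Y.depth (w s) : ℝ))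
variable (hex' : ∀ m : ℕ, ∃ s : ℕ, (m:ℝ) + C ≤ (Y.depth (w' s) : ℝ))
variable (hq : QGH Y l₁ l₂ lam D w) (hq' : QGH Y l₁ l₂ lam D w')
variable (hl₁ : 0 < l₁) (hl₂ : 0 < l₂) (hlam : 0 ≤ lam) (hD : 0 ≤ D)
variable (hC : qgC6 l₁ l₂ lam D ≤ C)
variable (hshare : ∀ j ≤ a, w j = w' j)
variable (hcross : ∀ i j : ℕ, a ≤ i → a ≤ j →
  l₁ * ((i:ℝ) + j - 2*a) - lam ≤ (Y.vdist (w i) (w' j) : ℝ))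

include hq hq' hl₁ hl₂ hlam hD hC hshare in
/-- agreement of the limit rays up to the branch depth. -/
lemma pair_low {t : ℕ} (ht : (t:ℝ) ≤ (Y.depth (w a) : ℝ) - qgC6 l₁ l₂ lam D) :
    limRayFun w C hex t = limRayFun w' C hex' t := by
  have hkey : ∀ (u : ℕ → Y.V) (hu : QGH Y l₁ l₂ lam D u)
      (hexu : ∀ m : ℕ, ∃ s : ℕ, (m:ℝ) + C ≤ (Y.depth (u s) : ℝ)),
      u a = w a → limRayFun u C hexu t = Y.anc (w a) t := by
    intro u hu hexu hua
    set s := max (qgT u C hexu t) a with hs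
    have h1 : Y.anc (u s) t = limRayFun u C hexu t :=
      (limRay_stab hexu hu hl₁ hl₂ hlam hD hC (le_max_left _ _)).1
    have has : a ≤ s := le_max_right _ _
    have hm : (t:ℝ) + qgC6 l₁ l₂ lam D ≤ (Y.depth (u a) : ℝ) := by rw [hua]; linarith
    have h2 := qg_stab hu hl₁ hl₂ hlam hD has hm
    rw [← h1, ← h2.1, hua]
  rw [hkey w hq hex rfl, hkey w' hq' hex' (hshare a le_rfl).symm]

include hq hq' hl₁ hl₂ hlam hD hC hshare hcross in
/-- the limit rays cannot agree much beyond the branch depth. -/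
lemma pair_up {t : ℕ} (hagree : limRayFun w C hex t = limRayFun w' C hex' t) :
    (t:ℝ) ≤ (Y.depth (w a) : ℝ) + qgCU l₁ l₂ lam D := by
  by_contra hcon
  push_neg at hcon
  have hC6 := qgC6_nonneg hl₁ hl₂ hlam hD
  have hCUD := le_qgCU_D (D := D) hl₁ hl₂ hlam hD
  have hCU := qgCU_nonneg (D := D) hl₁ hl₂ hlam hD
  have hda : (0:ℝ) ≤ (Y.depth (w a) : ℝ) := by positivity
  -- first commitment times
  have hkey : ∀ (u : ℕ → Y.V) (hu : QGH Y l₁ l₂ lam D u)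
      (hexu : ∀ m : ℕ, ∃ s : ℕ, (m:ℝ) + C ≤ (Y.depth (u s) : ℝ)),
      u a = w a →
      ∃ n : ℕ, a < n ∧ Y.anc (u n) t = limRayFun u C hexu t ∧ t ≤ Y.depth (u n) ∧
        (Y.depth (u n) : ℝ) ≤ (t:ℝ) + qgC6 l₁ l₂ lam D + (l₂ + lam) ∧
        (t:ℝ) + qgC6 l₁ l₂ lam D ≤ (Y.depth (u n) : ℝ) := by
    intro u hu hexu hua
    classical
    have hexn : ∃ n : ℕ, (t:ℝ) + qgC6 l₁ l₂ lam D ≤ (Y.depth (u n) : ℝ) :=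
      qg_exists_depth hu hl₁ _
    have hspec := Nat.find_spec hexn
    set n₁ := Nat.find hexn with hn₁
    have hmin : ∀ k < n₁, (Y.depth (u k) : ℝ) < (t:ℝ) + qgC6 l₁ l₂ lam D := by
      intro k hk
      have := Nat.find_min hexn hk
      push_neg at this
      exact this
    -- n₁ > a
    have hna : a < n₁ := by
      by_contra hc
      push_neg at hc
      -- depth (u a) = depth (w a); mono from n₁... gives depth (u a) small
      have hmono := qg_mono hu hl₁ hl₂ hlam hD hc
      have hme : (Y.meetDepth (u n₁) (u a) : ℝ) ≤ (Y.depth (u a) : ℝ) := by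
        exact_mod_cast Y.meet_le_depth_right (u n₁) (u a)
      rw [hua] at hme hmono
      -- depth (u n₁) ≤ depth (w a) + C6 < t
      have : (Y.depth (u n₁) : ℝ) ≤ (Y.depth (w a) : ℝ) + qgC6 l₁ l₂ lam D := by
        linarith [hmono, hme]
      linarith
    -- n₁ ≥ 1 and depth at n₁ bounded
    have hn1pos : 1 ≤ n₁ := by omega
    have hdub : (Y.depth (u n₁) : ℝ) ≤ (t:ℝ) + qgC6 l₁ l₂ lam D + (l₂ + lam) := by
      have hprev := hmin (n₁ - 1) (by omega)
      have hstep : (Y.vdist (u (n₁ - 1)) (u n₁) : ℝ) ≤ l₂ + lam := by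
        have h := hu.up (n₁ - 1) n₁ (by omega)
        have hc2 : ((n₁ - 1 : ℕ) : ℝ) = (n₁:ℝ) - 1 := by
          rw [Nat.cast_sub (by omega)]; norm_num
        rw [hc2] at h
        calc (Y.vdist (u (n₁-1)) (u n₁) : ℝ) ≤ l₂ * ((n₁:ℝ) - ((n₁:ℝ)-1)) + lam := h
        _ = l₂ + lam := by ring
      have := Y.depth_sub_le_vdist (u n₁) (u (n₁ - 1))
      rw [Y.vdist_comm] at this
      linarith
    have hanc : Y.anc (u n₁) t = limRayFun u C hexu t := by
      set s := max n₁ (qgT u C hexu t) with hs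
      have h2 := qg_stab hu hl₁ hl₂ hlam hD (s := n₁) (t := s) (m := t)
        (le_max_left n₁ _) hspec
      have h1 := (limRay_stab hexu hu hl₁ hl₂ hlam hD hC (m := t) (n := s) (le_max_right n₁ _)).1
      rw [← h1, ← h2.1]
    have hdt : t ≤ Y.depth (u n₁) := by
      have : (t:ℝ) ≤ (Y.depth (u n₁) : ℝ) := by linarith
      exact_mod_cast this
    exact ⟨n₁, hna, hanc, hdt, hdub, hspec⟩
  obtain ⟨n₁, hn₁a, hanc₁, hdt₁, hdub₁, hlb₁⟩ := hkey w hq hex rfl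
  obtain ⟨n₂, hn₂a, hanc₂, hdt₂, hdub₂, hlb₂⟩ := hkey w' hq' hex' (hshare a le_rfl).symm
  -- the two paths meet deep
  have hmeet : t ≤ Y.meetDepth (w n₁) (w' n₂) := by
    apply Y.le_meet hdt₁ hdt₂
    rw [hanc₁, hanc₂, hagree]
  have hmeetR : (t:ℝ) ≤ (Y.meetDepth (w n₁) (w' n₂) : ℝ) := by exact_mod_cast hmeet
  have hvd : (Y.vdist (w n₁) (w' n₂) : ℝ) ≤ 2 * (qgC6 l₁ l₂ lam D + (l₂ + lam)) := by
    rw [Y.vdist_cast]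
    linarith
  have hcr := hcross n₁ n₂ hn₁a.le hn₂a.le
  have hn₁S : (n₁:ℝ) - a ≤ qgS l₁ l₂ lam D := by
    rw [qgS, le_div_iff₀ hl₁]
    have h2a : (a:ℝ) ≤ (n₂:ℝ) := by exact_mod_cast hn₂a.le
    nlinarith
  have hvda : (Y.vdist (w a) (w n₁) : ℝ) ≤ l₂ * qgS l₁ l₂ lam D + lam := by
    have h := hq.up a n₁ hn₁a.le
    have hS := qgS_nonneg (D := D) hl₁ hl₂ hlam hD
    nlinarith [h, mul_le_mul_of_nonneg_left hn₁S hl₂.le]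
  have hfinal : (t:ℝ) + qgC6 l₁ l₂ lam D ≤
      (Y.depth (w a) : ℝ) + l₂ * qgS l₁ l₂ lam D + lam := by
    have := Y.depth_sub_le_vdist (w n₁) (w a)
    rw [Y.vdist_comm] at this
    linarith
  rw [qgCU] at hcon
  linarith

end Pair

namespace VTree

lemma meet_ge_close (T : VTree) (p q : T.V) :
    (T.depth q : ℝ) - (T.vdist p q : ℝ) ≤ (T.meetDepth p q : ℝ) := by
  have h := T.depth_sub_le_vdist q p
  rw [T.vdist_comm q p] at h
  have hcast := T.vdist_cast p q
  linarith

lemma exists_ray_through (T : VTree) (hT : T.OneChild) (v : T.V) :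
    ∃ θ : T.Ray, ∀ j ≤ T.depth v, θ.1 j = T.anc v j := by
  classical
  choose c hc using hT
  set e : ℕ → T.V := fun j => if j ≤ T.depth v then T.anc v j else c^[j - T.depth v] v with he
  have h0 : e 0 = T.root := by
    rw [he]; simp only [if_pos (Nat.zero_le _)]; exact T.anc_zero v
  have hstep : ∀ n, T.parent (e (n+1)) = e n ∧ e (n+1) ≠ T.root := by
    intro n
    by_cases h : n + 1 ≤ T.depth v
    · have hn : n ≤ T.depth v := by omega
      constructor
      · rw [he]; simp only [if_pos h, if_pos hn]; exact T.parent_anc h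
      · intro hcon
        rw [he] at hcon; simp only [if_pos h] at hcon
        have hda := T.depth_anc (v := v) (n := n+1) h
        rw [hcon, T.depth_root] at hda; omega
    · have hiter : e (n+1) = c (c^[n - T.depth v] v) := by
        rw [he]; simp only [if_neg h]
        rw [show n + 1 - T.depth v = (n - T.depth v) + 1 by omega,
          Function.iterate_succ_apply']
      constructor
      · rw [hiter, (hc _).2]
        by_cases hn : n ≤ T.depth v
        · have hnd : n = T.depth v := by omega
          rw [he]
          simp only [if_pos hn]
          rw [show n - T.depth v = 0 from by omega, Function.iterate_zero, id,
            hnd, T.anc_of_depth_le le_rfl]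
        · rw [he]; simp only [if_neg hn]
      · rw [hiter]; exact (hc _).1
  exact ⟨⟨e, h0, hstep⟩, fun j hj => by show e j = T.anc v j; rw [he]; simp only [if_pos hj]⟩

end VTree

lemma exp_rpow' (x y : ℝ) : (Real.exp x) ^ y = Real.exp (x * y) := by
  rw [Real.rpow_def_of_pos (Real.exp_pos x), Real.log_exp]

set_option maxHeartbeats 1000000

open VTree


/-- The control function `η(t) = A t^{α₁}` for `t ≤ 1`, `η(t) = A t^{α₂}` for `t ≥ 1`. -/
noncomputable def eta (A α₁ α₂ t : ℝ) : ℝ :=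
  if t ≤ 1 then A * t ^ α₁ else A * t ^ α₂

/-- a rough quasiisometry F between two rooted trees (each vertex having at
least one child), satisfying `L₁|x₁-x₂| - Λ ≤ |F(x₁)-F(x₂)| ≤ L₂|x₁-x₂| + Λ` and the
density condition, induces a well-defined bijective boundary map f : ∂X → ∂Y, which is
η-quasisymmetric with `η(t) = A t^{α₁}` for `t ≤ 1` and `η(t) = A t^{α₂}` for `t ≥ 1`,
where `α₁ = L₁ε_Y/ε_X`, `α₂ = L₂ε_Y/ε_X` and `A > 0` depends only on
`L₁, L₂, Λ, ε_X, ε_Y` and `|F(0_X)|`. -/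
theorem statement18 (εX εY L₁ L₂ Λ : ℝ) (hεX : 0 < εX) (hεY : 0 < εY)
    (hL₁ : 0 < L₁) (hL₂ : 0 < L₂) (hΛ : 0 ≤ Λ) (D : ℕ) :
    ∃ A : ℝ, 0 < A ∧
      ∀ (X Y : VTree), X.OneChild → Y.OneChild →
      ∀ F : X.V → Y.V,
        -- the rough quasiisometry bounds
        (∀ x₁ x₂ : X.V,
          L₁ * (X.vdist x₁ x₂ : ℝ) - Λ ≤ (Y.vdist (F x₁) (F x₂) : ℝ) ∧
            (Y.vdist (F x₁) (F x₂) : ℝ) ≤ L₂ * (X.vdist x₁ x₂ : ℝ) + Λ) →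
        -- the density condition
        (∀ y : Y.V, ∃ x : X.V, (Y.vdist (F x) y : ℝ) ≤ max (1 / L₁) L₂ + Λ) →
        -- |F(0_X)| ≤ D (the constant A is allowed to depend on |F(0_X)|)
        Y.depth (F X.root) ≤ D →
        ∃ f : X.Ray → Y.Ray,
          -- f is the boundary map induced by F: f ζ = lim F(x_i) along the ray to ζ
          (∀ ζ : X.Ray, ∀ m : ℕ, ∃ N : ℕ, ∀ n : ℕ, N ≤ n →
            Y.anc (F (ζ.1 n)) m = (f ζ).1 m) ∧
          -- f is a bijective homeomorphism
          Function.Bijective f ∧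
          (∀ ζ : X.Ray, ∀ δ : ℝ, 0 < δ → ∃ γ : ℝ, 0 < γ ∧
            ∀ ξ : X.Ray, X.rdist εX ζ ξ < γ → Y.rdist εY (f ζ) (f ξ) < δ) ∧
          -- f is η-quasisymmetric with the sharp exponents
          (∀ ζ ξ χ : X.Ray, ζ ≠ χ →
            Y.rdist εY (f ζ) (f ξ) ≤
              eta A (L₁ * εY / εX) (L₂ * εY / εX)
                (X.rdist εX ζ ξ / X.rdist εX ζ χ) * Y.rdist εY (f ζ) (f χ)) := by
  classical
  set C6 : ℝ := qgC6 L₁ L₂ Λ (D:ℝ) with hC6def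
  set CU : ℝ := qgCU L₁ L₂ Λ (D:ℝ) with hCUdef
  have hDnn : (0:ℝ) ≤ (D:ℝ) := Nat.cast_nonneg D
  have hC6 : 0 ≤ C6 := qgC6_nonneg hL₁ hL₂ hΛ hDnn
  have hCU : 0 ≤ CU := qgCU_nonneg hL₁ hL₂ hΛ hDnn
  refine ⟨Real.exp (εY * (3*C6 + CU + Λ + 1)), Real.exp_pos _, ?_⟩
  intro X Y hOX hOY F hQI hdens hFroot
  -- each ray image is a quasigeodesic
  have hqg : ∀ ζ : X.Ray, QGH Y L₁ L₂ Λ (D:ℝ) (F ∘ ζ.1) := by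
    intro ζ
    refine ⟨?_, ?_, ?_⟩
    · intro i j hij
      have h := (hQI (ζ.1 i) (ζ.1 j)).1
      rw [vdist_same_ray ζ hij] at h
      exact h
    · intro i j hij
      have h := (hQI (ζ.1 i) (ζ.1 j)).2
      rw [vdist_same_ray ζ hij] at h
      exact h
    · show (Y.depth (F (ζ.1 0)) : ℝ) ≤ (D:ℝ)
      rw [ζ.2.1]
      exact_mod_cast hFroot
  have hex : ∀ ζ : X.Ray, ∀ m : ℕ, ∃ s : ℕ, (m:ℝ) + C6 ≤ (Y.depth ((F ∘ ζ.1) s) : ℝ) :=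
    fun ζ m => qg_exists_depth (hqg ζ) hL₁ _
  set f : X.Ray → Y.Ray := fun ζ =>
    ⟨limRayFun (F ∘ ζ.1) C6 (hex ζ),
      (limRay_isRay (hex ζ) (hqg ζ) hL₁ hL₂ hΛ hDnn le_rfl hC6).1,
      (limRay_isRay (hex ζ) (hqg ζ) hL₁ hL₂ hΛ hDnn le_rfl hC6).2⟩ with hfdef
  have hfval : ∀ (ζ : X.Ray) (m : ℕ), (f ζ).1 m = limRayFun (F ∘ ζ.1) C6 (hex ζ) m :=
    fun _ _ => rfl
  -- pair bounds
  have hpair : ∀ ζ ξ : X.Ray, ζ ≠ ξ →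
      (∀ t : ℕ, (t:ℝ) ≤ (Y.depth (F (ζ.1 (kray ζ ξ))):ℝ) - C6 → (f ζ).1 t = (f ξ).1 t) ∧
      (∀ t : ℕ, (f ζ).1 t = (f ξ).1 t → (t:ℝ) ≤ (Y.depth (F (ζ.1 (kray ζ ξ))):ℝ) + CU) := by
    intro ζ ξ hne
    have hshare : ∀ j ≤ kray ζ ξ, (F ∘ ζ.1) j = (F ∘ ξ.1) j :=
      fun j hj => congrArg F (kray_mem hne j hj)
    have hcross : ∀ i j : ℕ, kray ζ ξ ≤ i → kray ζ ξ ≤ j →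
        L₁ * ((i:ℝ) + j - 2*(kray ζ ξ)) - Λ ≤ (Y.vdist ((F ∘ ζ.1) i) ((F ∘ ξ.1) j) : ℝ) := by
      intro i j hi hj
      have h := (hQI (ζ.1 i) (ξ.1 j)).1
      rw [vdist_ray_pts hne hi hj] at h
      exact h
    constructor
    · intro t ht
      rw [hfval, hfval]
      exact pair_low (hex ζ) (hex ξ) (hqg ζ) (hqg ξ) hL₁ hL₂ hΛ hDnn le_rfl hshare ht
    · intro t ht
      rw [hfval, hfval] at ht
      exact pair_up (hex ζ) (hex ξ) (hqg ζ) (hqg ξ) hL₁ hL₂ hΛ hDnn le_rfl hshare hcross ht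
  -- injectivity
  have hinj : Function.Injective f := by
    intro ζ ξ hfe
    by_contra hne
    set t := ⌈(Y.depth (F (ζ.1 (kray ζ ξ))) : ℝ) + CU⌉₊ + 1 with htdef
    have hag : (f ζ).1 t = (f ξ).1 t := by rw [hfe]
    have hup := (hpair ζ ξ hne).2 t hag
    have hlt : (Y.depth (F (ζ.1 (kray ζ ξ))):ℝ) + CU < (t:ℝ) := by
      have h1 := Nat.le_ceil ((Y.depth (F (ζ.1 (kray ζ ξ))) : ℝ) + CU)
      have h2 : (t:ℝ) = (⌈(Y.depth (F (ζ.1 (kray ζ ξ))) : ℝ) + CU⌉₊ : ℝ) + 1 := by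
        rw [htdef]; push_cast; ring
      linarith
    linarith
  -- bounds on the image branch depth
  have hkbound : ∀ ζ ξ : X.Ray, ζ ≠ ξ →
      (Y.depth (F (ζ.1 (kray ζ ξ))) : ℝ) - C6 - 1 ≤ (kray (f ζ) (f ξ) : ℝ) ∧
      (kray (f ζ) (f ξ) : ℝ) ≤ (Y.depth (F (ζ.1 (kray ζ ξ))) : ℝ) + CU := by
    intro ζ ξ hne
    have hfne : f ζ ≠ f ξ := fun h => hne (hinj h)
    constructor
    · set r := (Y.depth (F (ζ.1 (kray ζ ξ))) : ℝ) - C6 with hr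
      rcases le_or_gt r 0 with h | h
      · have h0 : (0:ℝ) ≤ (kray (f ζ) (f ξ):ℝ) := Nat.cast_nonneg _
        linarith
      · have hfl : ((⌊r⌋₊ : ℕ):ℝ) ≤ r := Nat.floor_le h.le
        have hagree : (f ζ).1 ⌊r⌋₊ = (f ξ).1 ⌊r⌋₊ := (hpair ζ ξ hne).1 _ (by linarith)
        have hle := le_kray hfne hagree
        have h2 : r - 1 < (⌊r⌋₊:ℝ) := Nat.sub_one_lt_floor r
        have h3 : ((⌊r⌋₊:ℕ):ℝ) ≤ (kray (f ζ) (f ξ):ℝ) := by exact_mod_cast hle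
        linarith
    · exact (hpair ζ ξ hne).2 _ (kray_mem hfne _ le_rfl)
  -- depth comparison along a single ray
  have hdepcomp : ∀ ζ : X.Ray, ∀ b a : ℕ, b ≤ a →
      (L₁ * ((a:ℝ) - b) - Λ - 2*C6 ≤ (Y.depth (F (ζ.1 a)):ℝ) - (Y.depth (F (ζ.1 b)):ℝ)) ∧
      ((Y.depth (F (ζ.1 a)):ℝ) - (Y.depth (F (ζ.1 b)):ℝ) ≤ L₂ * ((a:ℝ) - b) + Λ) := by
    intro ζ b a hba
    have hmono := qg_mono (hqg ζ) hL₁ hL₂ hΛ hDnn hba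
    have hlow := (hqg ζ).low b a hba
    have hup := (hqg ζ).up b a hba
    have hcast := Y.vdist_cast ((F ∘ ζ.1) b) ((F ∘ ζ.1) a)
    have hmd : (Y.meetDepth ((F ∘ ζ.1) b) ((F ∘ ζ.1) a) : ℝ) ≤ (Y.depth ((F ∘ ζ.1) a) : ℝ) := by
      exact_mod_cast Y.meet_le_depth_right _ _
    have hmd2 : (Y.meetDepth ((F ∘ ζ.1) b) ((F ∘ ζ.1) a) : ℝ) ≤ (Y.depth ((F ∘ ζ.1) b) : ℝ) := by
      exact_mod_cast Y.meet_le_depth_left _ _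
    constructor
    · show L₁ * ((a:ℝ) - b) - Λ - 2*C6 ≤ (Y.depth ((F ∘ ζ.1) a):ℝ) - (Y.depth ((F ∘ ζ.1) b):ℝ)
      linarith
    · show (Y.depth ((F ∘ ζ.1) a):ℝ) - (Y.depth ((F ∘ ζ.1) b):ℝ) ≤ L₂ * ((a:ℝ) - b) + Λ
      linarith
  have hgrow : ∀ ζ : X.Ray, ∀ a : ℕ, L₁ * a - Λ - D ≤ (Y.depth (F (ζ.1 a)) : ℝ) :=
    fun ζ a => qg_growth (hqg ζ) a
  refine ⟨f, ?_, ⟨hinj, ?_⟩, ?_, ?_⟩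
  · -- the limit property
    intro ζ m
    exact ⟨qgT (F ∘ ζ.1) C6 (hex ζ) m, fun n hn =>
      (limRay_stab (hex ζ) (hqg ζ) hL₁ hL₂ hΛ hDnn le_rfl hn).1⟩
  · -- surjectivity
    intro η
    set M₀ : ℝ := max (1/L₁) L₂ + Λ with hM₀def
    have hM₀ : 0 ≤ M₀ := by
      have h1 : (0:ℝ) ≤ max (1/L₁) L₂ := le_trans (by positivity) (le_max_left (1/L₁) L₂)
      rw [hM₀def]
      linarith
    set G : Y.V → X.V := fun y => Classical.choose (hdens y) with hGdef
    have hGd : ∀ y : Y.V, (Y.vdist (F (G y)) y : ℝ) ≤ M₀ :=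
      fun y => Classical.choose_spec (hdens y)
    set ρ : ℕ → X.V := fun s => G (η.1 s) with hρdef
    set lam' : ℝ := (2*M₀+Λ)/L₁ + (2*M₀+Λ)/L₂ with hlam'def
    set D' : ℝ := (M₀ + D + Λ)/L₁ with hD'def
    have hl1' : (0:ℝ) < 1/L₂ := by positivity
    have hl2' : (0:ℝ) < 1/L₁ := by positivity
    have hlam' : 0 ≤ lam' := by rw [hlam'def]; positivity
    have hD' : 0 ≤ D' := by rw [hD'def]; positivity
    have hvclose : ∀ i j : ℕ, i ≤ j →
        ((j:ℝ) - i) - 2*M₀ ≤ (Y.vdist (F (ρ i)) (F (ρ j)) : ℝ) ∧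
        (Y.vdist (F (ρ i)) (F (ρ j)) : ℝ) ≤ ((j:ℝ) - i) + 2*M₀ := by
      intro i j hij
      have h1 : (Y.vdist (F (ρ i)) (η.1 i) : ℝ) ≤ M₀ := hGd (η.1 i)
      have h2 : (Y.vdist (F (ρ j)) (η.1 j) : ℝ) ≤ M₀ := hGd (η.1 j)
      have hd := vdist_same_ray η hij
      have t1 := Y.vdist_triangle (F (ρ i)) (η.1 i) (F (ρ j))
      have t2 := Y.vdist_triangle (η.1 i) (η.1 j) (F (ρ j))
      have t4 := Y.vdist_triangle (F (ρ i)) (F (ρ j)) (η.1 j)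
      have t5 := Y.vdist_triangle (η.1 i) (F (ρ i)) (η.1 j)
      have c1 : (Y.vdist (η.1 i) (F (ρ i)) : ℝ) = Y.vdist (F (ρ i)) (η.1 i) := by
        rw [Y.vdist_comm]
      have c2 : (Y.vdist (η.1 j) (F (ρ j)) : ℝ) = Y.vdist (F (ρ j)) (η.1 j) := by
        rw [Y.vdist_comm]
      constructor
      · linarith
      · linarith
    have hqρ : QGH X (1/L₂) (1/L₁) lam' D' ρ := by
      refine ⟨?_, ?_, ?_⟩
      · intro i j hij
        have h := (hQI (ρ i) (ρ j)).2
        have hlo := (hvclose i j hij).1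
        have h5 : ((j:ℝ)-i) - (2*M₀+Λ) ≤ L₂ * (X.vdist (ρ i) (ρ j) : ℝ) := by linarith
        have h6 : (1/L₂)*(((j:ℝ)-i) - (2*M₀+Λ)) ≤ (X.vdist (ρ i) (ρ j) : ℝ) := by
          calc (1/L₂)*(((j:ℝ)-i) - (2*M₀+Λ)) ≤ (1/L₂)*(L₂ * (X.vdist (ρ i) (ρ j) : ℝ)) :=
                mul_le_mul_of_nonneg_left h5 (by positivity)
            _ = (X.vdist (ρ i) (ρ j) : ℝ) := by field_simp
        have h7 : (0:ℝ) ≤ (2*M₀+Λ)/L₁ := by positivity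
        calc (1/L₂)*((j:ℝ)-i) - lam' ≤ (1/L₂)*((j:ℝ)-i) - (2*M₀+Λ)/L₂ := by
              rw [hlam'def]; linarith
          _ = (1/L₂)*(((j:ℝ)-i) - (2*M₀+Λ)) := by field_simp
          _ ≤ (X.vdist (ρ i) (ρ j) : ℝ) := h6
      · intro i j hij
        have h := (hQI (ρ i) (ρ j)).1
        have hhi := (hvclose i j hij).2
        have h5 : L₁ * (X.vdist (ρ i) (ρ j) : ℝ) ≤ ((j:ℝ)-i) + (2*M₀+Λ) := by linarith
        have h8 : (0:ℝ) ≤ (2*M₀+Λ)/L₂ := by positivity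
        calc (X.vdist (ρ i) (ρ j) : ℝ) = (1/L₁)*(L₁ * (X.vdist (ρ i) (ρ j) : ℝ)) := by
              field_simp
          _ ≤ (1/L₁)*(((j:ℝ)-i) + (2*M₀+Λ)) := mul_le_mul_of_nonneg_left h5 (by positivity)
          _ = (1/L₁)*((j:ℝ)-i) + (2*M₀+Λ)/L₁ := by field_simp
          _ ≤ (1/L₁)*((j:ℝ)-i) + lam' := by rw [hlam'def]; linarith
      · have hroot : η.1 0 = Y.root := η.2.1
        have hA : (Y.vdist (F (ρ 0)) Y.root : ℝ) ≤ M₀ := by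
          have h := hGd (η.1 0)
          rw [hroot] at h
          show (Y.vdist (F (G (η.1 0))) Y.root : ℝ) ≤ M₀
          rw [hroot]
          exact h
        have hdep0 : (Y.depth (F (ρ 0)) : ℝ) ≤ M₀ := by
          rw [← Y.vdist_depth_bound]; exact hA
        have htri : (Y.vdist (F (ρ 0)) (F X.root) : ℝ) ≤ M₀ + D := by
          have hc := Y.vdist_cast (F (ρ 0)) (F X.root)
          have hm : (0:ℝ) ≤ (Y.meetDepth (F (ρ 0)) (F X.root) : ℝ) := by positivity
          have hFD : (Y.depth (F X.root) : ℝ) ≤ (D:ℝ) := by exact_mod_cast hFroot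
          linarith
        have hQ := (hQI (ρ 0) X.root).1
        have hXd : (X.vdist (ρ 0) X.root : ℝ) = X.depth (ρ 0) := X.vdist_depth_bound _
        rw [hXd] at hQ
        show (X.depth (ρ 0):ℝ) ≤ D'
        rw [hD'def, le_div_iff₀ hL₁]
        nlinarith
    set CG : ℝ := qgC6 (1/L₂) (1/L₁) lam' D' with hCGdef
    have hexρ : ∀ m : ℕ, ∃ s : ℕ, (m:ℝ) + CG ≤ (X.depth (ρ s):ℝ) :=
      fun m => qg_exists_depth hqρ hl1' _
    have hray := limRay_isRay hexρ hqρ hl1' hl2' hlam' hD' le_rfl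
      (qgC6_nonneg hl1' hl2' hlam' hD')
    set ζ : X.Ray := ⟨limRayFun ρ CG hexρ, hray.1, hray.2⟩ with hζdef
    refine ⟨ζ, ?_⟩
    apply Subtype.ext
    funext t
    show (f ζ).1 t = η.1 t
    rw [hfval]
    set n := qgT (F ∘ ζ.1) C6 (hex ζ) t with hndef
    have hdq : (t:ℝ) + C6 ≤ (Y.depth ((F ∘ ζ.1) n) : ℝ) := qgT_spec (hex ζ) t
    set s := max (qgT ρ CG hexρ n) (t + Nat.ceil M₀) with hsdef
    have hstab := limRay_stab hexρ hqρ hl1' hl2' hlam' hD' le_rfl (m := n) (n := s)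
      (le_max_left _ _)
    have hζn : ζ.1 n = X.anc (ρ s) n := hstab.1.symm
    have hdeps : n ≤ X.depth (ρ s) := hstab.2
    obtain ⟨θ, hθ⟩ := X.exists_ray_through hOX (ρ s)
    have hθn : θ.1 n = X.anc (ρ s) n := hθ n hdeps
    have hθd : θ.1 (X.depth (ρ s)) = ρ s := by
      rw [hθ _ le_rfl]; exact X.anc_of_depth_le le_rfl
    have hmono := qg_mono (hqg θ) hL₁ hL₂ hΛ hDnn hdeps
    have hkey1 : (t:ℝ) ≤ (Y.meetDepth (F (ζ.1 n)) (F (ρ s)) : ℝ) := by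
      have he1 : θ.1 n = ζ.1 n := by rw [hθn, ← hζn]
      simp only [Function.comp_apply] at hmono hdq
      rw [he1, hθd] at hmono
      linarith
    have hkey2 : (s:ℝ) - M₀ ≤ (Y.meetDepth (F (ρ s)) (η.1 s) : ℝ) := by
      have h := Y.meet_ge_close (F (ρ s)) (η.1 s)
      have hd : Y.depth (η.1 s) = s := ray_depth η s
      have hv : (Y.vdist (F (ρ s)) (η.1 s) : ℝ) ≤ M₀ := hGd (η.1 s)
      rw [hd] at h
      linarith
    have hts : (t:ℝ) + M₀ ≤ (s:ℝ) := by
      have h1 : t + Nat.ceil M₀ ≤ s := le_max_right _ _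
      have h1' : ((t + Nat.ceil M₀ : ℕ):ℝ) ≤ (s:ℝ) := by exact_mod_cast h1
      have hceil := Nat.le_ceil M₀
      push_cast at h1'
      linarith
    have hkey3 : t ≤ Y.meetDepth (F (ζ.1 n)) (η.1 s) := by
      have hu := Y.ultrametric (F (ζ.1 n)) (F (ρ s)) (η.1 s)
      have hresult : (t:ℝ) ≤ (Y.meetDepth (F (ζ.1 n)) (η.1 s) : ℝ) := by
        rcases le_total (Y.meetDepth (F (ζ.1 n)) (F (ρ s)))
            (Y.meetDepth (F (ρ s)) (η.1 s)) with hmm | hmm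
        · rw [min_eq_left hmm] at hu
          have hu' : (Y.meetDepth (F (ζ.1 n)) (F (ρ s)) : ℝ)
              ≤ (Y.meetDepth (F (ζ.1 n)) (η.1 s) : ℝ) := by exact_mod_cast hu
          linarith
        · rw [min_eq_right hmm] at hu
          have hu' : (Y.meetDepth (F (ρ s)) (η.1 s) : ℝ)
              ≤ (Y.meetDepth (F (ζ.1 n)) (η.1 s) : ℝ) := by exact_mod_cast hu
          linarith
      exact_mod_cast hresult
    have hanc := Y.anc_eq_of_le_meet hkey3
    have htsN : t ≤ s := by
      have : (t:ℝ) ≤ (s:ℝ) := by linarith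
      exact_mod_cast this
    calc limRayFun (F ∘ ζ.1) C6 (hex ζ) t = Y.anc (F (ζ.1 n)) t := rfl
      _ = Y.anc (η.1 s) t := hanc
      _ = η.1 t := ray_anc η htsN
  · -- continuity
    intro ζ δ hδ
    have hkey : ∃ a₀ : ℕ, (2/εY) * Real.exp (-εY*(L₁*(a₀:ℝ) - Λ - D - C6 - 1)) < δ := by
      obtain ⟨a₀, ha₀⟩ := exists_nat_gt ((Λ + (D:ℝ) + C6 + 1 + (Real.log (2/(εY*δ)))/εY)/L₁)
      refine ⟨a₀, ?_⟩
      rw [div_lt_iff₀ hL₁] at ha₀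
      have h2 : Real.exp (-εY*(L₁*(a₀:ℝ) - Λ - D - C6 - 1)) < εY * δ / 2 := by
        rw [← Real.exp_log (show (0:ℝ) < εY*δ/2 by positivity)]
        apply Real.exp_lt_exp.mpr
        have hloginv : Real.log (εY*δ/2) = - Real.log (2/(εY*δ)) := by
          rw [← Real.log_inv]
          congr 1
          field_simp
        rw [hloginv]
        have h3 : (Real.log (2/(εY*δ)))/εY < L₁*(a₀:ℝ) - (Λ + D + C6 + 1) := by linarith
        have h4 : Real.log (2/(εY*δ)) < εY * (L₁*(a₀:ℝ) - (Λ + D + C6 + 1)) := by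
          rw [div_lt_iff₀ hεY] at h3
          linarith [h3]
        nlinarith
      calc (2/εY) * Real.exp (-εY*(L₁*(a₀:ℝ) - Λ - D - C6 - 1))
          < (2/εY) * (εY*δ/2) := by
            apply mul_lt_mul_of_pos_left h2 (by positivity)
        _ = δ := by field_simp
    obtain ⟨a₀, ha₀⟩ := hkey
    refine ⟨(2/εX) * Real.exp (-εX*(a₀:ℝ)), by positivity, ?_⟩
    intro ξ hlt
    by_cases hne : ζ = ξ
    · rw [← hne, rdist_self]
      exact hδ
    · rw [rdist_eq εX hne] at hlt
      have hexp : Real.exp (-εX*(kray ζ ξ:ℝ)) < Real.exp (-εX*(a₀:ℝ)) := by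
        have h2εX : (0:ℝ) < 2/εX := by positivity
        exact lt_of_mul_lt_mul_left hlt h2εX.le
      have hgt : (a₀:ℝ) < (kray ζ ξ:ℝ) := by
        have h5 := Real.exp_lt_exp.mp hexp
        nlinarith
      have hfne : f ζ ≠ f ξ := fun h => hne (hinj h)
      rw [rdist_eq εY hfne]
      have hK := (hkbound ζ ξ hne).1
      have hgrowa := hgrow ζ (kray ζ ξ)
      have hKK : L₁*(kray ζ ξ:ℝ) - Λ - D - C6 - 1 ≤ (kray (f ζ) (f ξ):ℝ) := by linarith
      have hK2 : L₁*(a₀:ℝ) - Λ - D - C6 - 1 ≤ (kray (f ζ) (f ξ):ℝ) := by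
        have hm := mul_le_mul_of_nonneg_left hgt.le hL₁.le
        linarith
      have hmono2 : Real.exp (-εY * (kray (f ζ) (f ξ):ℝ))
          ≤ Real.exp (-εY*(L₁*(a₀:ℝ) - Λ - D - C6 - 1)) := by
        apply Real.exp_le_exp.mpr
        have hm := mul_le_mul_of_nonneg_left hK2 hεY.le
        linarith
      calc (2/εY) * Real.exp (-εY * (kray (f ζ) (f ξ):ℝ))
          ≤ (2/εY) * Real.exp (-εY*(L₁*(a₀:ℝ) - Λ - D - C6 - 1)) := by
            apply mul_le_mul_of_nonneg_left hmono2 (by positivity)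
        _ < δ := ha₀
  · -- quasisymmetry
    intro ζ ξ χ hζχ
    have hfζχ : f ζ ≠ f χ := fun h => hζχ (hinj h)
    have hα₁ : (0:ℝ) < L₁ * εY / εX := by positivity
    by_cases hζξ : ζ = ξ
    · rw [← hζξ, rdist_self, rdist_self, zero_div]
      rw [eta, if_pos (by norm_num : (0:ℝ) ≤ 1), Real.zero_rpow (ne_of_gt hα₁),
        mul_zero, zero_mul]
    · have hfζξ : f ζ ≠ f ξ := fun h => hζξ (hinj h)
      have had := hkbound ζ ξ hζξ
      have hbd := hkbound ζ χ hζχ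
      rw [rdist_eq εY hfζξ, rdist_eq εY hfζχ, rdist_eq εX hζξ, rdist_eq εX hζχ]
      have h2εX : (0:ℝ) < 2/εX := by positivity
      have hratio : ((2/εX) * Real.exp (-εX*(kray ζ ξ:ℝ))) /
          ((2/εX) * Real.exp (-εX*(kray ζ χ:ℝ)))
          = Real.exp (εX*((kray ζ χ:ℝ) - (kray ζ ξ:ℝ))) := by
        rw [mul_div_mul_left _ _ (ne_of_gt h2εX), ← Real.exp_sub]
        congr 1
        ring
      rw [hratio]
      set a := kray ζ ξ with hadef
      set b := kray ζ χ with hbdef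
      set a' := kray (f ζ) (f ξ) with ha'def
      set b' := kray (f ζ) (f χ) with hb'def
      set da := (Y.depth (F (ζ.1 a)) : ℝ) with hdadef
      set db := (Y.depth (F (ζ.1 b)) : ℝ) with hdbdef
      set E := 3*C6 + CU + Λ + 1 with hEdef
      rcases le_or_gt (b:ℝ) (a:ℝ) with hba | hab
      · -- t ≤ 1, exponent L₁
        have hbaN : b ≤ a := by exact_mod_cast hba
        have ht1 : Real.exp (εX*((b:ℝ) - a)) ≤ 1 := by
          rw [← Real.exp_zero]
          apply Real.exp_le_exp.mpr
          nlinarith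
        rw [eta, if_pos ht1, exp_rpow']
        have hdc := (hdepcomp ζ b a hbaN).1
        have hmain : Real.exp (-εY*(a':ℝ))
            ≤ Real.exp (εY*E + εX*((b:ℝ)-a)*(L₁*εY/εX) + -εY*(b':ℝ)) := by
          apply Real.exp_le_exp.mpr
          have harg : εX*((b:ℝ)-a)*(L₁*εY/εX) = εY*(L₁*((b:ℝ)-a)) := by
            field_simp
          rw [harg]
          have hkey : (b':ℝ) - a' ≤ E + L₁*((b:ℝ) - a) := by
            have h1 := had.1
            have h2 := hbd.2
            rw [hEdef]
            linarith
          have hmul := mul_le_mul_of_nonneg_left hkey hεY.le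
          ring_nf at hmul ⊢
          linarith [hmul]
        calc (2/εY) * Real.exp (-εY*(a':ℝ))
            ≤ (2/εY) * Real.exp (εY*E + εX*((b:ℝ)-a)*(L₁*εY/εX) + -εY*(b':ℝ)) :=
              mul_le_mul_of_nonneg_left hmain (by positivity)
          _ = Real.exp (εY*E) * Real.exp (εX*((b:ℝ)-a)*(L₁*εY/εX)) *
              ((2/εY)*Real.exp (-εY*(b':ℝ))) := by
              rw [Real.exp_add, Real.exp_add]
              ring
      · -- t > 1, exponent L₂
        have habN : a < b := by exact_mod_cast hab
        have hgt1 : (1:ℝ) < Real.exp (εX*((b:ℝ) - a)) := by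
          rw [← Real.exp_zero]
          apply Real.exp_lt_exp.mpr
          nlinarith
        rw [eta, if_neg (not_le.mpr hgt1), exp_rpow']
        have hdc := (hdepcomp ζ a b habN.le).2
        have hmain : Real.exp (-εY*(a':ℝ))
            ≤ Real.exp (εY*E + εX*((b:ℝ)-a)*(L₂*εY/εX) + -εY*(b':ℝ)) := by
          apply Real.exp_le_exp.mpr
          have harg : εX*((b:ℝ)-a)*(L₂*εY/εX) = εY*(L₂*((b:ℝ)-a)) := by
            field_simp
          rw [harg]
          have hkey : (b':ℝ) - a' ≤ E + L₂*((b:ℝ) - a) := by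
            have h1 := had.1
            have h2 := hbd.2
            rw [hEdef]
            linarith
          have hmul := mul_le_mul_of_nonneg_left hkey hεY.le
          ring_nf at hmul ⊢
          linarith [hmul]
        calc (2/εY) * Real.exp (-εY*(a':ℝ))
            ≤ (2/εY) * Real.exp (εY*E + εX*((b:ℝ)-a)*(L₂*εY/εX) + -εY*(b':ℝ)) :=
              mul_le_mul_of_nonneg_left hmain (by positivity)
          _ = Real.exp (εY*E) * Real.exp (εX*((b:ℝ)-a)*(L₂*εY/εX)) *
              ((2/εY)*Real.exp (-εY*(b':ℝ))) := by
              rw [Real.exp_add, Real.exp_add]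
              ring
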